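/- Assume 0 < η_i ≤ 1/‖A_i‖² for i = 1, …, p. Let (x_n) and (x̂_n) be two heavy-ball iterate sequences generated with the same random indices, data, and step sizes but different initial points x₀ and x̂₀. Then for all integers n ≥ 0 there holds E[‖x_n − x̂_n‖²] ≤ ‖x₀ − x̂₀‖². -/

import Mathlib

/-- Expectation with respect to the first `m` i.i.d. uniformly distributed indices:
for a quantity `f` determined by the coordinates `i_0, …, i_{m-1}` of the sample path,
`avg p hp m f = p^{-m} ∑_{(i_0,…,i_{m-1}) ∈ {1,…,p}^m} f`. -/
noncomputable def avg (p : ℕ) (hp : 0 < p) (m : ℕ) (f : (ℕ → Fin p) → ℝ) : ℝ :=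
  (∑ σ : Fin m → Fin p, f (fun k => if h : k < m then σ ⟨k, h⟩ else ⟨0, hp⟩)) / (p : ℝ) ^ m

open scoped RealInnerProductSpace

lemma avg_const (p : ℕ) (hp : 0 < p) (m : ℕ) (c : ℝ) : avg p hp m (fun _ => c) = c := by
  have : ((p : ℝ)) ^ m ≠ 0 := by positivity
  simp [avg, Finset.sum_const, Finset.card_univ]
  field_simp

lemma avg_mono (p : ℕ) (hp : 0 < p) (m : ℕ) {f g : (ℕ → Fin p) → ℝ}
    (h : ∀ ω, f ω ≤ g ω) : avg p hp m f ≤ avg p hp m g := by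
  have hpos : (0:ℝ) < (p : ℝ) ^ m := by positivity
  unfold avg
  exact div_le_div_of_nonneg_right (Finset.sum_le_sum fun σ _ => h _) hpos.le

lemma avg_succ (p : ℕ) (hp : 0 < p) (m : ℕ) (f : (ℕ → Fin p) → ℝ) :
    avg p hp (m+1) f
      = avg p hp m (fun ω => (∑ i : Fin p, f (Function.update ω m i)) / p) := by
  have key : ∀ (τ : Fin m → Fin p) (i : Fin p),
      (fun k => if h : k < m+1 then (Fin.snoc τ i : Fin (m+1) → Fin p) ⟨k, h⟩ else ⟨0, hp⟩)
      = Function.update (fun k => if h : k < m then τ ⟨k, h⟩ else ⟨0, hp⟩) m i := by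
    intro τ i
    funext k
    rcases lt_trichotomy k m with hk | rfl | hk
    · rw [Function.update_of_ne hk.ne, dif_pos (hk.trans (Nat.lt_succ_self m)), dif_pos hk]
      simp [Fin.snoc, hk]
    · rw [Function.update_self, dif_pos (Nat.lt_succ_self k)]
      simp [Fin.snoc]
    · rw [Function.update_of_ne hk.ne', dif_neg (by omega), dif_neg (by omega)]
  have hsum : (∑ σ : Fin (m+1) → Fin p,
        f (fun k => if h : k < m+1 then σ ⟨k, h⟩ else ⟨0, hp⟩))
      = ∑ τ : Fin m → Fin p, ∑ i : Fin p,
        f (Function.update (fun k => if h : k < m then τ ⟨k, h⟩ else ⟨0, hp⟩) m i) := by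
    rw [← Equiv.sum_comp (Fin.snocEquiv (fun _ => Fin p)), Fintype.sum_prod_type,
      Finset.sum_comm]
    refine Finset.sum_congr rfl fun τ _ => Finset.sum_congr rfl fun i _ => ?_
    simp only [Fin.snocEquiv, Equiv.coe_fn_mk]
    rw [key τ i]
  rw [avg, avg, hsum, pow_succ, Finset.sum_div, Finset.sum_div]
  exact Finset.sum_congr rfl fun τ _ => by rw [div_div, mul_comm]

lemma avg_succ_indep (p : ℕ) (hp : 0 < p) (m : ℕ) {f : (ℕ → Fin p) → ℝ}
    (h : ∀ ω i, f (Function.update ω m i) = f ω) :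
    avg p hp (m+1) f = avg p hp m f := by
  rw [avg_succ]
  congr 1
  funext ω
  have hp' : (p : ℝ) ≠ 0 := Nat.cast_ne_zero.mpr hp.ne'
  simp [h ω, Finset.sum_const, Finset.card_univ]
  field_simp

lemma avg_sum (p : ℕ) (hp : 0 < p) (m : ℕ) {ι : Type*} (s : Finset ι)
    (F : ι → (ℕ → Fin p) → ℝ) :
    avg p hp m (fun ω => ∑ k ∈ s, F k ω) = ∑ k ∈ s, avg p hp m (F k) := by
  unfold avg
  rw [← Finset.sum_div]
  congr 1
  exact Finset.sum_comm

lemma avg_div_const (p : ℕ) (hp : 0 < p) (m : ℕ) (f : (ℕ → Fin p) → ℝ) (c : ℝ) :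
    avg p hp m (fun ω => f ω / c) = avg p hp m f / c := by
  unfold avg
  rw [← Finset.sum_div, div_div, div_div, mul_comm]

lemma key_ineq {X : Type*} [NormedAddCommGroup X] [InnerProductSpace ℝ X] [CompleteSpace X]
    {Y : Type*} [NormedAddCommGroup Y] [InnerProductSpace ℝ Y] [CompleteSpace Y]
    (A : X →L[ℝ] Y) {η : ℝ} (hη0 : 0 < η) (hη1 : η ≤ 1 / ‖A‖ ^ 2)
    (n : ℝ) (hn : 0 ≤ n) (D D' : X) :
    ‖((n+1) • D - n • D') - η • (A.adjoint (A D))‖ ^ 2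
      ≤ ‖(n+1) • D - n • D'‖ ^ 2 - (n+1) * (η * ‖A D‖ ^ 2) + n * (η * ‖A D'‖ ^ 2) := by
  set E := (n+1) • D - n • D' with hE
  have hηA : η * ‖A‖ ^ 2 ≤ 1 := by
    rcases eq_or_lt_of_le (norm_nonneg A) with h0 | h0
    · rw [← h0]; norm_num
    · rw [le_div_iff₀ (by positivity)] at hη1; linarith
  have hexp : ‖E - η • (A.adjoint (A D))‖ ^ 2
      = ‖E‖ ^ 2 - 2 * (η * ⟪A E, A D⟫) + η^2 * ‖A.adjoint (A D)‖ ^ 2 := by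
    rw [norm_sub_sq_real, real_inner_smul_right, ContinuousLinearMap.adjoint_inner_right,
      norm_smul]
    rw [Real.norm_eq_abs, mul_pow, sq_abs]
  have hAE : (A : X →L[ℝ] Y) E = (n+1) • A D - n • A D' := by
    rw [hE, map_sub, map_smul, map_smul]
  have hinner : ⟪A E, A D⟫ = (n+1) * ‖A D‖ ^ 2 - n * ⟪A D', A D⟫ := by
    rw [hAE, inner_sub_left, real_inner_smul_left, real_inner_smul_left,
      real_inner_self_eq_norm_sq]
  have hadj : ‖A.adjoint (A D)‖ ≤ ‖A‖ * ‖A D‖ := by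
    have := A.adjoint.le_opNorm (A D)
    rwa [ContinuousLinearMap.adjoint.norm_map A] at this
  have hadj2 : η^2 * ‖A.adjoint (A D)‖ ^ 2 ≤ η * ‖A D‖ ^ 2 := by
    have h1 : η^2 * ‖A.adjoint (A D)‖ ^ 2 ≤ η^2 * (‖A‖^2 * ‖A D‖^2) := by
      have := mul_le_mul hadj hadj (norm_nonneg _) (by positivity)
      nlinarith [this]
    have h2 : (η * ‖A‖^2) * (η * ‖A D‖^2) ≤ 1 * (η * ‖A D‖^2) :=
      mul_le_mul_of_nonneg_right hηA (by positivity)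
    nlinarith [h1, h2]
  have hcs : ⟪A D', A D⟫ ≤ ‖A D'‖ * ‖A D‖ := real_inner_le_norm _ _
  have h2ab : 2 * (‖A D'‖ * ‖A D‖) ≤ ‖A D'‖^2 + ‖A D‖^2 := by
    nlinarith [sq_nonneg (‖A D'‖ - ‖A D‖)]
  rw [hexp, hinner]
  nlinarith [mul_le_mul_of_nonneg_left hcs (mul_nonneg hn hη0.le),
    mul_le_mul_of_nonneg_left h2ab (mul_nonneg hn hη0.le)]

/-- **Lemma IMA.lem1.3 (stability with respect to the initial point).**  Assume
`0 < η i ≤ 1/‖A i‖²`.  Let `(x n)` and `(x̂ n)` be the stochastic heavy-ball iterate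
sequences generated with the same random indices, data `y i` and step sizes `η i`, but
initial points `x₀` and `x̂₀` respectively.  Then for all `n ≥ 0`:
`E[‖x n − x̂ n‖²] ≤ ‖x₀ − x̂₀‖²`. -/
theorem stmt_13 {p : ℕ} (hp : 0 < p) {X : Type*} [NormedAddCommGroup X]
    [InnerProductSpace ℝ X] [CompleteSpace X]
    {Y : Fin p → Type*} [∀ i, NormedAddCommGroup (Y i)] [∀ i, InnerProductSpace ℝ (Y i)]
    [∀ i, CompleteSpace (Y i)]
    (A : ∀ i, X →L[ℝ] Y i) (y : ∀ i, Y i)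
    (η : Fin p → ℝ) (hη : ∀ i, 0 < η i ∧ η i ≤ 1 / ‖A i‖ ^ 2)
    (x₀ xh₀ : X) (x xh : (ℕ → Fin p) → ℕ → X)
    (hx0 : ∀ ω, x ω 0 = x₀) (hxh0 : ∀ ω, xh ω 0 = xh₀)
    (hx : ∀ ω, ∀ n : ℕ, x ω (n + 1) = x ω n
      - (((n : ℝ) + 2)⁻¹ * η (ω n)) • ((A (ω n)).adjoint ((A (ω n)) (x ω n) - y (ω n)))
      + ((n : ℝ) / ((n : ℝ) + 2)) • (x ω n - x ω (n - 1)))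
    (hxh : ∀ ω, ∀ n : ℕ, xh ω (n + 1) = xh ω n
      - (((n : ℝ) + 2)⁻¹ * η (ω n)) • ((A (ω n)).adjoint ((A (ω n)) (xh ω n) - y (ω n)))
      + ((n : ℝ) / ((n : ℝ) + 2)) • (xh ω n - xh ω (n - 1))) :
    ∀ n : ℕ,
      avg p hp n (fun ω => ‖x ω n - xh ω n‖ ^ 2) ≤ ‖x₀ - xh₀‖ ^ 2 := by
  classical
  -- the difference sequence and energy sequence
  set d : (ℕ → Fin p) → ℕ → X := fun ω n => x ω n - xh ω n with hd
  set e : (ℕ → Fin p) → ℕ → X :=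
    fun ω n => ((n : ℝ) + 1) • d ω n - (n : ℝ) • d ω (n - 1) with he
  -- average quadratic form
  set Qb : X → ℝ := fun v => (∑ i : Fin p, η i * ‖(A i) v‖ ^ 2) / p with hQb
  have hQbNN : ∀ v, 0 ≤ Qb v := by
    intro v
    apply div_nonneg _ (Nat.cast_nonneg p)
    exact Finset.sum_nonneg fun i _ => mul_nonneg (hη i).1.le (by positivity)
  -- dependence only on past coordinates
  have hdep : ∀ n : ℕ, ∀ ω ω' : ℕ → Fin p, (∀ k, k < n → ω k = ω' k) →
      x ω n = x ω' n ∧ xh ω n = xh ω' n := by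
    intro n
    induction n using Nat.strong_induction_on with
    | _ n ih =>
      match n with
      | 0 => intro ω ω' _; rw [hx0, hx0, hxh0, hxh0]; exact ⟨rfl, rfl⟩
      | (m+1) =>
        intro ω ω' h
        have hm := ih m (by omega) ω ω' (fun k hk => h k (by omega))
        have hm1 := ih (m-1) (by omega) ω ω' (fun k hk => h k (by omega))
        have hω : ω m = ω' m := h m (by omega)
        constructor
        · rw [hx, hx, hm.1, hm1.1, hω]
        · rw [hxh, hxh, hm.2, hm1.2, hω]
  have hddep : ∀ n : ℕ, ∀ ω ω' : ℕ → Fin p, (∀ k, k < n → ω k = ω' k) →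
      d ω n = d ω' n := by
    intro n ω ω' h
    have := hdep n ω ω' h
    rw [hd]
    simp only
    rw [this.1, this.2]
  have hedep : ∀ n : ℕ, ∀ ω ω' : ℕ → Fin p, (∀ k, k < n → ω k = ω' k) →
      e ω n = e ω' n := by
    intro n ω ω' h
    rw [he]
    simp only
    rw [hddep n ω ω' h, hddep (n-1) ω ω' (fun k hk => h k (by omega))]
  -- recursion for d
  have hdrec : ∀ ω n, d ω (n+1) = d ω n
      - (((n : ℝ) + 2)⁻¹ * η (ω n)) • ((A (ω n)).adjoint ((A (ω n)) (d ω n)))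
      + ((n : ℝ) / ((n : ℝ) + 2)) • (d ω n - d ω (n - 1)) := by
    intro ω n
    rw [hd]
    simp only
    rw [hx, hxh]
    simp only [map_sub]
    module
  -- recursion for e
  have herec : ∀ ω n, e ω (n+1) = e ω n
      - η (ω n) • ((A (ω n)).adjoint ((A (ω n)) (d ω n))) := by
    intro ω n
    have hn2 : ((n : ℝ) + 2) ≠ 0 := by positivity
    rw [he]
    simp only [Nat.add_sub_cancel, Nat.cast_add, Nat.cast_one]
    rw [hdrec]
    match_scalars <;> field_simp <;> ring
  -- e at zero
  have he0 : ∀ ω, e ω 0 = x₀ - xh₀ := by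
    intro ω
    rw [he]
    simp only [Nat.cast_zero, zero_add, one_smul, zero_smul, sub_zero, Nat.zero_sub]
    rw [hd]
    simp only
    rw [hx0, hxh0]
  -- the Lyapunov quantity
  set Φ : ℕ → ℝ := fun n =>
    avg p hp n (fun ω => ‖e ω n‖ ^ 2 + (n : ℝ) * Qb (d ω (n-1))) with hΦ
  have hΦ0 : Φ 0 = ‖x₀ - xh₀‖ ^ 2 := by
    rw [hΦ]
    simp only [Nat.cast_zero, zero_mul, add_zero]
    have : (fun ω => ‖e ω 0‖ ^ 2) = fun _ : ℕ → Fin p => ‖x₀ - xh₀‖ ^ 2 := by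
      funext ω; rw [he0]
    rw [this, avg_const]
  -- one-step decrease of Φ
  have hstep : ∀ n : ℕ, Φ (n+1) ≤ Φ n := by
    intro n
    rw [hΦ]
    simp only
    rw [avg_succ]
    apply avg_mono
    intro ω
    have hupd : ∀ i : Fin p,
        ‖e (Function.update ω n i) (n+1)‖ ^ 2
          + ((n:ℕ)+1 : ℕ) * Qb (d (Function.update ω n i) ((n+1)-1))
        ≤ ‖e ω n‖ ^ 2 - ((n:ℝ)+1) * (η i * ‖(A i) (d ω n)‖ ^ 2)
            + (n:ℝ) * (η i * ‖(A i) (d ω (n-1))‖ ^ 2) + ((n:ℝ)+1) * Qb (d ω n) := by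
      intro i
      have hagree : ∀ k, k < n → (Function.update ω n i) k = ω k :=
        fun k hk => Function.update_of_ne hk.ne _ _
      have hdn : d (Function.update ω n i) n = d ω n := hddep n _ _ hagree
      have hdn1 : d (Function.update ω n i) (n-1) = d ω (n-1) :=
        hddep (n-1) _ _ (fun k hk => hagree k (by omega))
      have hen : e (Function.update ω n i) n = e ω n := hedep n _ _ hagree
      have heup : e (Function.update ω n i) (n+1)
          = e ω n - η i • ((A i).adjoint ((A i) (d ω n))) := by
        rw [herec]
        rw [hen, hdn, Function.update_self]
      rw [heup]
      simp only [Nat.add_sub_cancel, hdn]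
      have := key_ineq (A i) (hη i).1 (hη i).2 (n : ℝ) (Nat.cast_nonneg n)
        (d ω n) (d ω (n-1))
      have hee : e ω n = ((n:ℝ)+1) • d ω n - (n:ℝ) • d ω (n-1) := rfl
      rw [hee]
      push_cast
      linarith [this]
    calc (∑ i : Fin p, (‖e (Function.update ω n i) (n+1)‖ ^ 2
            + ((n:ℕ)+1 : ℕ) * Qb (d (Function.update ω n i) ((n+1)-1)))) / p
        ≤ (∑ i : Fin p, (‖e ω n‖ ^ 2 - ((n:ℝ)+1) * (η i * ‖(A i) (d ω n)‖ ^ 2)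
            + (n:ℝ) * (η i * ‖(A i) (d ω (n-1))‖ ^ 2) + ((n:ℝ)+1) * Qb (d ω n))) / p := by
          apply div_le_div_of_nonneg_right (Finset.sum_le_sum fun i _ => hupd i)
            (by positivity)
      _ = ‖e ω n‖ ^ 2 + (n:ℝ) * Qb (d ω (n-1)) := by
          have hpne : (p : ℝ) ≠ 0 := Nat.cast_ne_zero.mpr hp.ne'
          have hQd : ∑ i : Fin p, η i * ‖(A i) (d ω n)‖ ^ 2 = p * Qb (d ω n) := by
            rw [hQb]; field_simp
          have hQd1 : ∑ i : Fin p, η i * ‖(A i) (d ω (n-1))‖ ^ 2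
              = p * Qb (d ω (n-1)) := by
            rw [hQb]; field_simp
          rw [Finset.sum_add_distrib, Finset.sum_add_distrib, Finset.sum_sub_distrib,
            ← Finset.mul_sum, ← Finset.mul_sum, hQd, hQd1, Finset.sum_const,
            Finset.card_univ, Fintype.card_fin, Finset.sum_const, Finset.card_univ,
            Fintype.card_fin]
          field_simp
          ring
  -- Φ is bounded by its initial value
  have hΦle : ∀ n, Φ n ≤ ‖x₀ - xh₀‖ ^ 2 := by
    intro n
    induction n with
    | zero => rw [hΦ0]
    | succ m ih => exact le_trans (hstep m) ih
  -- expected energy is bounded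
  have hEn : ∀ n, avg p hp n (fun ω => ‖e ω n‖ ^ 2) ≤ ‖x₀ - xh₀‖ ^ 2 := by
    intro n
    refine le_trans ?_ (hΦle n)
    rw [hΦ]
    apply avg_mono
    intro ω
    have := hQbNN (d ω (n-1))
    nlinarith [Nat.cast_nonneg (α := ℝ) n]
  -- tower property
  have htower : ∀ k n : ℕ, k ≤ n →
      avg p hp n (fun ω => ‖e ω k‖ ^ 2) = avg p hp k (fun ω => ‖e ω k‖ ^ 2) := by
    intro k n hkn
    induction n with
    | zero => interval_cases k; rfl
    | succ m ih =>
      rcases Nat.lt_or_ge k (m+1) with hlt | hge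
      · have hk : k ≤ m := by omega
        rw [← ih hk]
        apply avg_succ_indep
        intro ω i
        rw [hedep k (Function.update ω m i) ω
          (fun l hl => Function.update_of_ne (by omega) _ _)]
      · have : k = m + 1 := by omega
        subst this; rfl
  -- telescoping: sum of e equals (n+1) d
  have htel : ∀ ω n, ∑ k ∈ Finset.range (n+1), e ω k = ((n:ℝ)+1) • d ω n := by
    intro ω n
    induction n with
    | zero =>
      simp only [Finset.range_one, Finset.sum_singleton, Nat.cast_zero, zero_add, one_smul]
      rw [he]
      simp only [Nat.cast_zero, zero_add, one_smul, zero_smul, sub_zero]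
    | succ m ih =>
      rw [Finset.sum_range_succ, ih]
      have : e ω (m+1) = ((m:ℝ)+2) • d ω (m+1) - ((m:ℝ)+1) • d ω m := by
        rw [he]
        simp only [Nat.add_sub_cancel]
        push_cast
        module
      rw [this]
      push_cast
      module
  -- pointwise Jensen bound
  have hjensen : ∀ ω n, ‖d ω n‖ ^ 2
      ≤ (∑ k ∈ Finset.range (n+1), ‖e ω k‖ ^ 2) / ((n:ℝ)+1) := by
    intro ω n
    have h1 : ((n:ℝ)+1) * ‖d ω n‖ = ‖∑ k ∈ Finset.range (n+1), e ω k‖ := by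
      rw [htel, norm_smul, Real.norm_eq_abs, abs_of_pos (by positivity)]
    have h2 : ‖∑ k ∈ Finset.range (n+1), e ω k‖
        ≤ ∑ k ∈ Finset.range (n+1), ‖e ω k‖ := norm_sum_le _ _
    have h3 : (∑ k ∈ Finset.range (n+1), ‖e ω k‖) ^ 2
        ≤ ((n:ℝ)+1) * ∑ k ∈ Finset.range (n+1), ‖e ω k‖ ^ 2 := by
      have := sq_sum_le_card_mul_sum_sq (s := Finset.range (n+1))
        (f := fun k => ‖e ω k‖)
      simpa using this
    have h4 : ‖∑ k ∈ Finset.range (n+1), e ω k‖ ^ 2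
        ≤ (∑ k ∈ Finset.range (n+1), ‖e ω k‖) ^ 2 :=
      pow_le_pow_left₀ (norm_nonneg _) h2 2
    have h5 : (((n:ℝ)+1))^2 * ‖d ω n‖^2 = ‖∑ k ∈ Finset.range (n+1), e ω k‖ ^ 2 := by
      rw [← h1]; ring
    rw [le_div_iff₀ (show (0:ℝ) < (n:ℝ)+1 by positivity)]
    nlinarith [h3, h4, h5]
  -- conclusion
  intro n
  calc avg p hp n (fun ω => ‖x ω n - xh ω n‖ ^ 2)
      ≤ avg p hp n (fun ω => (∑ k ∈ Finset.range (n+1), ‖e ω k‖ ^ 2) / ((n:ℝ)+1)) :=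
        avg_mono p hp n (fun ω => hjensen ω n)
    _ = (∑ k ∈ Finset.range (n+1), avg p hp n (fun ω => ‖e ω k‖ ^ 2)) / ((n:ℝ)+1) := by
        rw [avg_div_const, avg_sum]
    _ ≤ (∑ k ∈ Finset.range (n+1), ‖x₀ - xh₀‖ ^ 2) / ((n:ℝ)+1) := by
        apply div_le_div_of_nonneg_right ?_ (by positivity)
        refine Finset.sum_le_sum fun k hk => ?_
        rw [htower k n (by simpa using Nat.lt_succ_iff.mp (Finset.mem_range.mp hk))]
        exact hEn k
    _ = ‖x₀ - xh₀‖ ^ 2 := by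
        rw [Finset.sum_const, Finset.card_range]
        have : ((n:ℝ)+1) ≠ 0 := by positivity
        field_simp
        rw [nsmul_eq_mul]; push_cast; ring
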